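/- Let H be a hypergraph, D a k-power dominating set of H, v ∈ D, and suppose deg_w(v, N[D\{v}]) ≤ k. If additionally v is adjacent to some other vertex of D, then D\{v} is a k-power dominating set of H; hence no minimum k-power dominating set contains a vertex v with deg_w(v, N[D\{v}]) ≤ k that is adjacent to another vertex of D. -/

import Mathlib

/-- A hypergraph on vertex type `V`, given by its finite set of (finite) edges. -/
structure FinHypergraph (V : Type*) where
  edges : Finset (Finset V)

namespace FinHypergraph

variable {V : Type*}

/-- Two vertices are adjacent iff they are distinct and share an edge. -/
def Adj (H : FinHypergraph V) (u v : V) : Prop :=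
  u ≠ v ∧ ∃ e ∈ H.edges, u ∈ e ∧ v ∈ e

/-- The underlying adjacency (simple) graph of a hypergraph. -/
def graph (H : FinHypergraph V) : SimpleGraph V where
  Adj := H.Adj
  symm := by
    constructor
    rintro u v ⟨hne, e, he, hu, hv⟩
    exact ⟨hne.symm, e, he, hv, hu⟩
  loopless := by
    constructor
    rintro u ⟨hne, -⟩
    exact hne rfl

/-- Closed neighborhood of a set of vertices. -/
def closedNbhd (H : FinHypergraph V) (S : Set V) : Set V :=
  S ∪ {u | ∃ v ∈ S, H.Adj v u}

/-- `F` is a set of edges through `v` covering all neighbors of `v` outside `S`. -/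
def Covers (H : FinHypergraph V) (v : V) (S : Set V) (F : Finset (Finset V)) : Prop :=
  F ⊆ H.edges ∧ (∀ e ∈ F, v ∈ e) ∧ ∀ u, H.Adj v u → u ∉ S → ∃ e ∈ F, u ∈ e

/-- The white degree of `v` with respect to the blue set `S`: the minimum number of
edges containing `v` that cover all neighbors of `v` outside `S`. -/
noncomputable def wdeg (H : FinHypergraph V) (v : V) (S : Set V) : ℕ :=
  sInf {t | ∃ F, H.Covers v S F ∧ F.card ≤ t}

/-- One step of the `k`-forcing propagation: every blue vertex whose white
neighbors can be covered by at most `k` incident edges forces its neighbors blue. -/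
def step (H : FinHypergraph V) (k : ℕ) (S : Set V) : Set V :=
  S ∪ {u | ∃ v ∈ S, H.Adj v u ∧ H.wdeg v S ≤ k}

/-- `D` is a `k`-power dominating set if iterating the propagation from `N[D]`
colors every vertex blue. -/
def IsPDS (H : FinHypergraph V) (k : ℕ) (D : Set V) : Prop :=
  ∃ t : ℕ, (H.step k)^[t] (H.closedNbhd D) = Set.univ

/-- The `k`-power domination number. -/
noncomputable def pdn (H : FinHypergraph V) (k : ℕ) : ℕ :=
  sInf {t | ∃ D : Finset V, H.IsPDS k ↑D ∧ D.card ≤ t}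

/-- A dominating set. -/
def Dominating (H : FinHypergraph V) (S : Set V) : Prop :=
  H.closedNbhd S = Set.univ

/-- The domination number. -/
noncomputable def gamma (H : FinHypergraph V) : ℕ :=
  sInf {t | ∃ D : Finset V, H.Dominating ↑D ∧ D.card ≤ t}

/-- An `r`-uniform hypergraph. -/
def Uniform (H : FinHypergraph V) (r : ℕ) : Prop :=
  ∀ e ∈ H.edges, e.card = r

/-- Connectivity of the underlying adjacency graph. -/
def Connected (H : FinHypergraph V) : Prop := H.graph.Connected

/-- No isolated vertices: every vertex lies in some edge. -/
def NoIsolated (H : FinHypergraph V) : Prop :=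
  ∀ v : V, ∃ e ∈ H.edges, v ∈ e

/-- External private neighbors of `v` with respect to `D`. -/
def epn (H : FinHypergraph V) (v : V) (D : Set V) : Set V :=
  {u | u ∉ D ∧ H.Adj v u ∧ ∀ w ∈ D, w ≠ v → ¬ H.Adj w u}

/-- Number of connected components of the subhypergraph induced on `D`
(with respect to adjacency within `D`). -/
noncomputable def numComponents (H : FinHypergraph V) (D : Set V) : ℕ :=
  Nat.card (SimpleGraph.ConnectedComponent (SimpleGraph.induce D H.graph))

end FinHypergraph

/-!
If `v` already lies in `N[D \ {v}]`, then its white degree there lets it force all of its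
neighbours in the first propagation step, which recovers `N[D]`; from then on the
propagation of `D` runs unchanged, one step late, by monotonicity of the step map.
-/

namespace FinHypergraph

variable {V : Type*} (H : FinHypergraph V) (k : ℕ)

lemma exists_covers (v : V) (S : Set V) : ∃ F, H.Covers v S F := by
  classical
  refine ⟨H.edges.filter (v ∈ ·), Finset.filter_subset _ _,
    fun e he => (Finset.mem_filter.mp he).2, ?_⟩
  rintro w ⟨-, e, he, hv, hw⟩ -
  exact ⟨e, Finset.mem_filter.mpr ⟨he, hv⟩, hw⟩

lemma wdeg_antitone (v : V) : Antitone (H.wdeg v) := by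
  intro S T hST
  apply csInf_le_csInf (OrderBot.bddBelow _)
  · obtain ⟨F, hF⟩ := H.exists_covers v S
    exact ⟨F.card, F, hF, le_rfl⟩
  · rintro t ⟨F, ⟨hE, hv, hcov⟩, hcard⟩
    exact ⟨F, ⟨hE, hv, fun w hadj hwT => hcov w hadj (fun hwS => hwT (hST hwS))⟩, hcard⟩

lemma step_monotone : Monotone (H.step k) := by
  rintro S T hST x (hx | ⟨w, hwS, hadj, hwdeg⟩)
  · exact Or.inl (hST hx)
  · exact Or.inr ⟨w, hST hwS, hadj, (H.wdeg_antitone w hST).trans hwdeg⟩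

variable {H k}

lemma IsPDS.of_closedNbhd_subset_step {D D' : Set V} (hD : H.IsPDS k D)
    (hsub : H.closedNbhd D ⊆ H.step k (H.closedNbhd D')) : H.IsPDS k D' := by
  obtain ⟨t, ht⟩ := hD
  refine ⟨t + 1, Set.eq_univ_of_univ_subset ?_⟩
  rw [Function.iterate_succ_apply, ← ht]
  exact (H.step_monotone k).iterate t hsub

lemma mem_closedNbhd_diff_singleton {D : Set V} {u v : V} (hu : u ∈ D) (hadj : H.Adj u v) :
    v ∈ H.closedNbhd (D \ {v}) :=
  Or.inr ⟨u, ⟨hu, hadj.1⟩, hadj⟩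

lemma closedNbhd_subset_step_closedNbhd_diff_singleton {D : Set V} {v : V}
    (hvN : v ∈ H.closedNbhd (D \ {v})) (hw : H.wdeg v (H.closedNbhd (D \ {v})) ≤ k) :
    H.closedNbhd D ⊆ H.step k (H.closedNbhd (D \ {v})) := by
  rintro x (hxD | ⟨w, hwD, hwx⟩)
  · by_cases hxv : x = v
    · exact Or.inl (hxv ▸ hvN)
    · exact Or.inl (Or.inl ⟨hxD, hxv⟩)
  · by_cases hwv : w = v
    · exact Or.inr ⟨v, hvN, hwv ▸ hwx, hw⟩
    · exact Or.inl (Or.inr ⟨w, ⟨hwD, hwv⟩, hwx⟩)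

lemma IsPDS.diff_singleton {D : Set V} {v : V} (hD : H.IsPDS k D)
    (hvN : v ∈ H.closedNbhd (D \ {v})) (hw : H.wdeg v (H.closedNbhd (D \ {v})) ≤ k) :
    H.IsPDS k (D \ {v}) :=
  hD.of_closedNbhd_subset_step (closedNbhd_subset_step_closedNbhd_diff_singleton hvN hw)

lemma pdn_le_card {D : Finset V} (hD : H.IsPDS k ↑D) : H.pdn k ≤ D.card :=
  Nat.sInf_le ⟨D, hD, le_rfl⟩

end FinHypergraph

open FinHypergraph in
theorem remove_vertex_kPDS_general {V : Type*} [DecidableEq V]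
    (H : FinHypergraph V) (k : ℕ) (D : Finset V) (v u : V)
    (hD : H.IsPDS k ↑D) (hv : v ∈ D)
    (hw : H.wdeg v (H.closedNbhd (↑D \ {v})) ≤ k)
    (hu : u ∈ D) (hadj : H.Adj u v) :
    H.IsPDS k ↑(D.erase v) ∧ H.pdn k < D.card := by
  have hPDS : H.IsPDS k ↑(D.erase v) := by
    rw [Finset.coe_erase]
    exact hD.diff_singleton (mem_closedNbhd_diff_singleton hu hadj) hw
  exact ⟨hPDS, (pdn_le_card hPDS).trans_lt (Finset.card_erase_lt_of_mem hv)⟩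

open FinHypergraph in
/-- If `D` is a `k`-power dominating set, `v ∈ D` has
`deg_w(v, N[D \ {v}]) ≤ k`, and `v` is adjacent to another vertex of `D`, then
`D \ {v}` is a `k`-power dominating set; hence `D` is not minimum, i.e. no minimum
`k`-power dominating set contains such a vertex. -/
theorem remove_vertex_kPDS {V : Type*} [DecidableEq V]
    (H : FinHypergraph V) (k : ℕ) (D : Finset V) (v u : V)
    (hD : H.IsPDS k ↑D) (hv : v ∈ D)
    (hw : H.wdeg v (H.closedNbhd (↑D \ {v})) ≤ k)
    (hu : u ∈ D) (huv : u ≠ v) (hadj : H.Adj u v) :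
    H.IsPDS k ↑(D.erase v) ∧ H.pdn k < D.card :=
  remove_vertex_kPDS_general H k D v u hD hv hw hu hadj
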